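/- Let B be a Boolean algebra, S a finite subset of B closed under meet ⊓ and containing ⊤, □ : B → B a map satisfying the modal axioms (m.i) and (m.ii), and p a finitely additive probability on B. Define the belief Bel(φ) = p(□φ) and the basic belief assignment m(φ) = p(φ^□) for φ ∈ S. Then for every φ ∈ S, Bel(φ) = ∑_{ψ∈S, ψ≤φ} m(ψ), and equivalently m(φ) = Bel(φ) − ∑_{ψ∈S, ψ<φ} m(ψ). -/

import Mathlib

open scoped Classical

/-- The basic propositional assignment (bpa) of `φ`:
`φ^□ = □φ ⊓ (⊔_{ψ ∈ S, ψ < φ} □ψ)ᶜ`. -/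
noncomputable def bpa {B : Type*} [BooleanAlgebra B]
    (S : Finset B) (box : B → B) (φ : B) : B :=
  box φ ⊓ ((S.filter fun ψ => ψ < φ).sup box)ᶜ

/-!
The modal axioms make `□` monotone with `□x ⊓ □y ≤ □(x ⊓ y)`. Distinct `φ, ψ ∈ S` have disjoint
bpas: say `φ ⊓ ψ < φ`; then `φ^□` avoids `□(φ ⊓ ψ)`, while `φ^□ ⊓ ψ^□ ≤ □φ ⊓ □ψ ≤ □(φ ⊓ ψ)`,
and `φ ⊓ ψ ∈ S` since `S` is closed under meets. Since `φ^□ = □φ \ ⊔_{ψ < φ} □ψ`, well-founded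
induction over the finite poset `S` shows that `□φ` is the join of the `ψ^□` with `ψ ∈ S`,
`ψ ≤ φ`, and additivity of `p` turns this disjoint join into the sum.
-/

section Modal

variable {B : Type*} [BooleanAlgebra B] {box : B → B}

theorem box_mono (mi : box ⊤ = ⊤) (mii : ∀ x y : B, box (xᶜ ⊔ y) ≤ (box x)ᶜ ⊔ box y) :
    Monotone box := by
  intro x y hxy
  have hK : box (x ⇨ y) ≤ box x ⇨ box y := by simpa only [himp_eq, sup_comm] using mii x y
  rw [himp_eq_top_iff.2 hxy, mi, top_le_iff, himp_eq_top_iff] at hK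
  exact hK

theorem box_inf_le (mi : box ⊤ = ⊤) (mii : ∀ x y : B, box (xᶜ ⊔ y) ≤ (box x)ᶜ ⊔ box y)
    (x y : B) : box x ⊓ box y ≤ box (x ⊓ y) := by
  have hK : box (x ⇨ x ⊓ y) ≤ box x ⇨ box (x ⊓ y) := by
    simpa only [himp_eq, sup_comm] using mii x (x ⊓ y)
  have hy : box y ≤ box (x ⇨ x ⊓ y) := box_mono mi mii (le_himp_iff.2 (inf_comm y x).le)
  rw [inf_comm]
  exact le_himp_iff.1 (hy.trans hK)

end Modal

section Bpa

variable {B : Type*} [BooleanAlgebra B] {S : Finset B} {box : B → B}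

theorem bpa_eq_sdiff (φ : B) : bpa S box φ = box φ \ (S.filter fun ψ => ψ < φ).sup box :=
  sdiff_eq.symm

theorem bpa_le_box (φ : B) : bpa S box φ ≤ box φ := inf_le_left

theorem disjoint_bpa_box_of_lt {φ ψ : B} (hψ : ψ ∈ S) (hlt : ψ < φ) :
    Disjoint (bpa S box φ) (box ψ) := by
  rw [bpa_eq_sdiff]
  exact disjoint_sdiff_self_left.mono_right (Finset.le_sup (Finset.mem_filter.2 ⟨hψ, hlt⟩))

theorem disjoint_bpa_of_inf_lt (mi : box ⊤ = ⊤)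
    (mii : ∀ x y : B, box (xᶜ ⊔ y) ≤ (box x)ᶜ ⊔ box y) {φ ψ : B}
    (hS : φ ⊓ ψ ∈ S) (hlt : φ ⊓ ψ < φ) : Disjoint (bpa S box φ) (bpa S box ψ) := by
  have hbox : bpa S box φ ⊓ bpa S box ψ ≤ box (φ ⊓ ψ) :=
    (inf_le_inf (bpa_le_box φ) (bpa_le_box ψ)).trans (box_inf_le mi mii φ ψ)
  rw [disjoint_iff]
  exact ((disjoint_bpa_box_of_lt hS hlt).mono_left inf_le_left).eq_bot_of_le hbox

theorem pairwiseDisjoint_bpa (hmeet : ∀ x ∈ S, ∀ y ∈ S, x ⊓ y ∈ S) (mi : box ⊤ = ⊤)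
    (mii : ∀ x y : B, box (xᶜ ⊔ y) ≤ (box x)ᶜ ⊔ box y) :
    (S : Set B).PairwiseDisjoint (bpa S box) := by
  intro φ hφ ψ hψ hne
  have hS : φ ⊓ ψ ∈ S := hmeet φ hφ ψ hψ
  rcases (inf_le_left : φ ⊓ ψ ≤ φ).lt_or_eq with hlt | heq
  · exact disjoint_bpa_of_inf_lt mi mii hS hlt
  · have hlt : ψ ⊓ φ < ψ := by
      rw [inf_comm, heq]
      exact lt_of_le_of_ne (heq ▸ inf_le_right) hne
    exact (disjoint_bpa_of_inf_lt mi mii (inf_comm φ ψ ▸ hS) hlt).symm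

theorem box_le_sup_bpa {φ : B} (hφ : φ ∈ S) :
    box φ ≤ (S.filter fun ψ => ψ ≤ φ).sup (bpa S box) := by
  refine S.finite_toSet.wellFoundedOn.induction (r := (· < ·)) hφ
    (P := fun φ => box φ ≤ (S.filter fun ψ => ψ ≤ φ).sup (bpa S box)) fun φ hφ ih => ?_
  calc box φ ≤ bpa S box φ ⊔ (S.filter fun ψ => ψ < φ).sup box := by
        rw [bpa_eq_sdiff]; exact le_sdiff_sup
    _ ≤ (S.filter fun ψ => ψ ≤ φ).sup (bpa S box) := by
        refine sup_le (Finset.le_sup (Finset.mem_filter.2 ⟨hφ, le_rfl⟩)) (Finset.sup_le ?_)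
        intro χ hχ
        obtain ⟨hχS, hχφ⟩ := Finset.mem_filter.1 hχ
        refine (ih χ hχS hχφ).trans (Finset.sup_mono ?_)
        exact Finset.monotone_filter_right S fun ψ _ h => h.trans hχφ.le

theorem sup_bpa_eq_box (mi : box ⊤ = ⊤) (mii : ∀ x y : B, box (xᶜ ⊔ y) ≤ (box x)ᶜ ⊔ box y)
    {φ : B} (hφ : φ ∈ S) : (S.filter fun ψ => ψ ≤ φ).sup (bpa S box) = box φ := by
  refine le_antisymm (Finset.sup_le fun ψ hψ => ?_) (box_le_sup_bpa hφ)
  exact (bpa_le_box ψ).trans (box_mono mi mii (Finset.mem_filter.1 hψ).2)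

end Bpa

section Additive

variable {B M : Type*} [DistribLattice B] [OrderBot B] [AddCancelCommMonoid M] {p : B → M}

theorem map_bot_eq_zero_of_additive (hpadd : ∀ x y : B, x ⊓ y = ⊥ → p (x ⊔ y) = p x + p y) :
    p ⊥ = 0 := by
  have h := hpadd ⊥ ⊥ (inf_idem ⊥)
  rw [sup_idem] at h
  exact left_eq_add.1 h

theorem map_finset_sup_of_pairwiseDisjoint
    (hpadd : ∀ x y : B, x ⊓ y = ⊥ → p (x ⊔ y) = p x + p y) {ι : Type*} (f : ι → B)
    (s : Finset ι) (hs : (s : Set ι).PairwiseDisjoint f) : p (s.sup f) = ∑ i ∈ s, p (f i) := by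
  induction s using Finset.cons_induction with
  | empty => exact map_bot_eq_zero_of_additive hpadd
  | cons a s ha ih =>
    rw [Finset.coe_cons, Set.pairwiseDisjoint_insert_of_notMem ha] at hs
    have hdisj : Disjoint (f a) (s.sup f) := Finset.disjoint_sup_right.2 hs.2
    rw [Finset.sup_cons, Finset.sum_cons, hpadd _ _ hdisj.eq_bot, ih hs.1]

end Additive

theorem Finset.filter_le_eq_insert_filter_lt {α : Type*} [PartialOrder α] {s : Finset α} {a : α}
    (ha : a ∈ s) : (s.filter fun b => b ≤ a) = insert a (s.filter fun b => b < a) := by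
  ext b
  rcases eq_or_ne b a with rfl | hb
  · simp [ha]
  · simp [hb, le_iff_lt_or_eq]

theorem belief_eq_sum_bba_general {B : Type*} [BooleanAlgebra B]
    (S : Finset B)
    (hmeet : ∀ x ∈ S, ∀ y ∈ S, x ⊓ y ∈ S)
    (box : B → B)
    (mi : box ⊤ = ⊤)
    (mii : ∀ x y : B, box (xᶜ ⊔ y) ≤ (box x)ᶜ ⊔ box y)
    (p : B → ℝ)
    (hpadd : ∀ x y : B, x ⊓ y = ⊥ → p (x ⊔ y) = p x + p y) :
    ∀ φ ∈ S,
      p (box φ) = ∑ ψ ∈ S.filter fun ψ => ψ ≤ φ, p (bpa S box ψ) ∧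
        p (bpa S box φ) = p (box φ) - ∑ ψ ∈ S.filter fun ψ => ψ < φ, p (bpa S box ψ) := by
  intro φ hφ
  have hbel : p (box φ) = ∑ ψ ∈ S.filter fun ψ => ψ ≤ φ, p (bpa S box ψ) := by
    rw [← sup_bpa_eq_box mi mii hφ]
    exact map_finset_sup_of_pairwiseDisjoint hpadd _ _
      ((pairwiseDisjoint_bpa hmeet mi mii).subset (Finset.coe_subset.2 (Finset.filter_subset _ _)))
  refine ⟨hbel, ?_⟩
  rw [hbel, Finset.filter_le_eq_insert_filter_lt hφ, Finset.sum_insert (by simp)]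
  exact (add_sub_cancel_right _ _).symm

/-- With `Bel(φ) = p(□φ)` and `m(φ) = p(φ^□)`, one has
`Bel(φ) = ∑_{ψ ≤ φ} m(ψ)`, and equivalently `m(φ) = Bel(φ) − ∑_{ψ < φ} m(ψ)`. -/
theorem belief_eq_sum_bba {B : Type*} [BooleanAlgebra B]
    (S : Finset B)
    (hmeet : ∀ x ∈ S, ∀ y ∈ S, x ⊓ y ∈ S)
    (htop : ⊤ ∈ S)
    (box : B → B)
    (mi : box ⊤ = ⊤)
    (mii : ∀ x y : B, box (xᶜ ⊔ y) ≤ (box x)ᶜ ⊔ box y)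
    (p : B → ℝ)
    (hp0 : ∀ x : B, 0 ≤ p x)
    (hptop : p ⊤ = 1)
    (hpadd : ∀ x y : B, x ⊓ y = ⊥ → p (x ⊔ y) = p x + p y) :
    ∀ φ ∈ S,
      p (box φ) = ∑ ψ ∈ S.filter fun ψ => ψ ≤ φ, p (bpa S box ψ) ∧
        p (bpa S box φ) = p (box φ) - ∑ ψ ∈ S.filter fun ψ => ψ < φ, p (bpa S box ψ) :=
  belief_eq_sum_bba_general S hmeet box mi mii p hpadd
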